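/- arXiv:1801.03701 — 6 statements merged into one kernel-verified Lean document; each statement's English description precedes it below -/
import Mathlib

section
/- Any solution (E(t), L(t)) of the system E' = b_E L - d_E E - h(L)E, L' = h(L)E - d_L L - c L², with nonnegative initial data, remains nonnegative and satisfies E(t) + L(t) ≤ max(E(0)+L(0), K) for all t ≥ 0, where K = (b_E + d_E - d_L)²/(4 c d_E). -/
open Real Set Filter Topology

/-- If `g` has positive derivative at `t0`, vanishes at `t0`, and is positive on `[0, t0)`,
we get a contradiction. -/
lemma no_touch {g : ℝ → ℝ} {D t0 : ℝ} (hg : HasDerivAt g D t0) (hD : 0 < D)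
    (hg0 : g t0 = 0) (ht0 : 0 < t0)
    (hposb : ∀ s, 0 ≤ s → s < t0 → 0 < g s) : False := by
  have hW : HasDerivWithinAt g D (Iio t0) t0 := hg.hasDerivWithinAt
  rw [hasDerivWithinAt_iff_tendsto_slope] at hW
  have hdiff : Iio t0 \ {t0} = Iio t0 := Set.diff_singleton_eq_self (by simp)
  rw [hdiff] at hW
  have hne : (𝓝[Iio t0] t0).NeBot := nhdsLT_neBot t0
  have h1 : ∀ᶠ s in 𝓝[Iio t0] t0, 0 < slope g t0 s := hW.eventually (eventually_gt_nhds hD)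
  have h2 : ∀ᶠ s in 𝓝[Iio t0] t0, 0 < s :=
    eventually_nhdsWithin_of_eventually_nhds (eventually_gt_nhds ht0)
  have h3 : ∀ᶠ s in 𝓝[Iio t0] t0, s ∈ Iio t0 := eventually_mem_nhdsWithin
  obtain ⟨s, hs1, hs2, hs3⟩ := (h1.and (h2.and h3)).exists
  have hslope : slope g t0 s = g s / (s - t0) := by
    rw [slope_def_field, hg0, sub_zero]
  rw [hslope] at hs1
  have hneg : s - t0 < 0 := sub_neg.mpr hs3
  have hgs : 0 < g s := hposb s hs2.le hs3
  have : g s / (s - t0) < 0 := div_neg_of_pos_of_neg hgs hneg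
  linarith

set_option maxHeartbeats 2000000 in
theorem stmt_0
    (bE dE dL c : ℝ) (hbE : 0 < bE) (hdE : 0 < dE) (hdL : 0 < dL) (hc : 0 < c)
    (h : ℝ → ℝ) (hC1 : ContDiff ℝ 1 h) (hpos : ∀ x, 0 ≤ x → 0 < h x)
    (h0 : ℝ) (hbd : ∀ x, 0 ≤ x → h x ≤ h0)
    (E L : ℝ → ℝ)
    (hE : ∀ t, 0 ≤ t → HasDerivAt E (bE * L t - dE * E t - h (L t) * E t) t)
    (hL : ∀ t, 0 ≤ t → HasDerivAt L (h (L t) * E t - dL * L t - c * (L t)^2) t)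
    (hE0 : 0 ≤ E 0) (hL0 : 0 ≤ L 0) :
    ∀ t, 0 ≤ t →
      0 ≤ E t ∧ 0 ≤ L t ∧
      E t + L t ≤ max (E 0 + L 0) ((bE + dE - dL)^2 / (4 * c * dE)) := by
  have hhcont : Continuous h := hC1.continuous
  -- Step 1: a δ > 0 such that h is positive on (-δ, ∞)
  have hh0 : 0 < h 0 := hpos 0 le_rfl
  obtain ⟨δ, hδpos, hδ⟩ : ∃ δ > 0, ∀ y : ℝ, dist y 0 < δ → dist (h y) (h 0) < h 0 := by
    have hca : ContinuousAt h 0 := hhcont.continuousAt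
    obtain ⟨δ, hδpos, hδ⟩ := Metric.continuousAt_iff.mp hca (h 0) hh0
    exact ⟨δ, hδpos, fun y hy => hδ hy⟩
  have hhpos : ∀ y : ℝ, -δ < y → 0 < h y := by
    intro y hy
    rcases le_or_gt 0 y with hy0 | hy0
    · exact hpos y hy0
    · have hd : dist y 0 < δ := by
        rw [Real.dist_eq, sub_zero, abs_of_neg hy0]; linarith
      have hd2 := hδ y hd
      rw [Real.dist_eq] at hd2
      have := abs_lt.mp hd2
      linarith [this.1]
  -- Step 2: bound on h on [-δ, 0]
  obtain ⟨y0, hy0mem, hy0max⟩ :=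
    (isCompact_Icc (a := -δ) (b := (0:ℝ))).exists_isMaxOn
      ⟨0, by constructor <;> [linarith; rfl]⟩ hhcont.continuousOn
  set H := h y0 with hHdef
  have hHpos : 0 < H := lt_of_lt_of_le hh0 (hy0max ⟨by linarith, le_rfl⟩)
  have hHbd : ∀ y ∈ Icc (-δ) (0:ℝ), h y ≤ H := fun y hy => hy0max hy
  set C := bE + H + c * δ + 1 with hCdef
  have hCpos : 0 < C := by positivity
  -- Step 3: key positivity claim for perturbed functions
  have key : ∀ T, 0 ≤ T → ∀ ε, 0 < ε → ε * Real.exp (C * T) < δ →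
      ∀ s ∈ Icc (0:ℝ) T, 0 < E s + ε * Real.exp (C * s) ∧ 0 < L s + ε * Real.exp (C * s) := by
    intro T hT ε hε hεδ
    by_contra hcon
    push_neg at hcon
    obtain ⟨s0, hs0, hs0'⟩ := hcon
    set Eε := fun s => E s + ε * Real.exp (C * s) with hEεdef
    set Lε := fun s => L s + ε * Real.exp (C * s) with hLεdef
    have hexpc : Continuous fun s : ℝ => ε * Real.exp (C * s) :=
      continuous_const.mul (Real.continuous_exp.comp (continuous_const.mul continuous_id))
    set S := {s ∈ Icc (0:ℝ) T | Eε s ≤ 0 ∨ Lε s ≤ 0} with hSdef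
    have hSne : S.Nonempty := by
      refine ⟨s0, hs0, ?_⟩
      rcases le_or_gt (Eε s0) 0 with h' | h'
      · exact Or.inl h'
      · exact Or.inr (hs0' h')
    have hEc : ContinuousOn Eε (Icc 0 T) := fun x hx =>
      (((hE x hx.1).continuousAt).add hexpc.continuousAt).continuousWithinAt
    have hLc : ContinuousOn Lε (Icc 0 T) := fun x hx =>
      (((hL x hx.1).continuousAt).add hexpc.continuousAt).continuousWithinAt
    have hminc : ContinuousOn (fun s => min (Eε s) (Lε s)) (Icc 0 T) := hEc.inf hLc
    have hSeq : S = Icc (0:ℝ) T ∩ (fun s => min (Eε s) (Lε s)) ⁻¹' Iic 0 := by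
      ext x
      simp only [hSdef, Set.mem_sep_iff, Set.mem_inter_iff, Set.mem_preimage, Set.mem_Iic,
        min_le_iff]
    have hSclosed : IsClosed S := by
      rw [hSeq]
      exact hminc.preimage_isClosed_of_isClosed isClosed_Icc isClosed_Iic
    have hbdd : BddBelow S := ⟨0, fun x hx => hx.1.1⟩
    set t0 := sInf S with ht0def
    have ht0S : t0 ∈ S := hSclosed.csInf_mem hSne hbdd
    have ht0I : t0 ∈ Icc (0:ℝ) T := ht0S.1
    have hmin0 : Eε t0 ≤ 0 ∨ Lε t0 ≤ 0 := ht0S.2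
    have hE0' : 0 < Eε 0 := by
      simp only [hEεdef, mul_zero, Real.exp_zero, mul_one]
      linarith
    have hL0' : 0 < Lε 0 := by
      simp only [hLεdef, mul_zero, Real.exp_zero, mul_one]
      linarith
    have ht0pos : 0 < t0 := by
      rcases ht0I.1.lt_or_eq with h' | h'
      · exact h'
      · exfalso
        rw [← h'] at hmin0
        rcases hmin0 with h'' | h'' <;> linarith
    have hbefore : ∀ s, 0 ≤ s → s < t0 → 0 < Eε s ∧ 0 < Lε s := by
      intro s hs hst
      by_contra hcc
      push_neg at hcc
      have hsI : s ∈ Icc (0:ℝ) T := ⟨hs, le_trans hst.le ht0I.2⟩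
      have hsS : s ∈ S := by
        refine ⟨hsI, ?_⟩
        rcases le_or_gt (Eε s) 0 with h' | h'
        · exact Or.inl h'
        · exact Or.inr (hcc h')
      exact absurd (csInf_le hbdd hsS) (not_le.mpr hst)
    have hneb : (𝓝[<] t0).NeBot := nhdsLT_neBot t0
    have hEt0 : 0 ≤ Eε t0 := by
      have hca : ContinuousAt Eε t0 := ((hE t0 ht0I.1).continuousAt).add hexpc.continuousAt
      refine ge_of_tendsto (hca.continuousWithinAt.tendsto (s := Iio t0)) ?_
      have hev : ∀ᶠ s in 𝓝[<] t0, 0 < s :=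
        eventually_nhdsWithin_of_eventually_nhds (eventually_gt_nhds ht0pos)
      filter_upwards [hev, eventually_mem_nhdsWithin] with s h1 h2
      exact (hbefore s h1.le h2).1.le
    have hLt0 : 0 ≤ Lε t0 := by
      have hca : ContinuousAt Lε t0 := ((hL t0 ht0I.1).continuousAt).add hexpc.continuousAt
      refine ge_of_tendsto (hca.continuousWithinAt.tendsto (s := Iio t0)) ?_
      have hev : ∀ᶠ s in 𝓝[<] t0, 0 < s :=
        eventually_nhdsWithin_of_eventually_nhds (eventually_gt_nhds ht0pos)
      filter_upwards [hev, eventually_mem_nhdsWithin] with s h1 h2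
      exact (hbefore s h1.le h2).2.le
    clear_value Eε Lε S t0
    set z := ε * Real.exp (C * t0) with hzdef
    clear_value z
    have hzpos : 0 < z := by rw [hzdef]; positivity
    have hzlt : z < δ := by
      have h1 : Real.exp (C * t0) ≤ Real.exp (C * T) :=
        Real.exp_le_exp.mpr (mul_le_mul_of_nonneg_left ht0I.2 hCpos.le)
      have h2 : z ≤ ε * Real.exp (C * T) := by
        rw [hzdef]; exact mul_le_mul_of_nonneg_left h1 hε.le
      linarith
    have hderexp : HasDerivAt (fun s => ε * Real.exp (C * s)) (C * z) t0 := by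
      have h1 : HasDerivAt (fun s : ℝ => C * s) C t0 := by
        simpa using (hasDerivAt_id t0).const_mul C
      have h3 := h1.exp.const_mul ε
      rw [hzdef]
      exact h3.congr_deriv (by ring)
    rcases hmin0 with hcase | hcase
    · -- E touches zero first
      have hEeq : Eε t0 = 0 := le_antisymm hcase hEt0
      have hEt0v : E t0 = -z := by
        have h' := hEeq
        simp only [hEεdef] at h'
        rw [hzdef]; linarith
      have hLt0v : -z ≤ L t0 := by
        have h' := hLt0
        simp only [hLεdef] at h'
        rw [hzdef]; linarith
      have hLδ : -δ < L t0 := by linarith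
      have hhL : 0 < h (L t0) := hhpos _ hLδ
      have hder : HasDerivAt Eε
          ((bE * L t0 - dE * E t0 - h (L t0) * E t0) + C * z) t0 := by
        rw [hEεdef]; exact (hE t0 ht0I.1).add hderexp
      have hD : 0 < (bE * L t0 - dE * E t0 - h (L t0) * E t0) + C * z := by
        rw [hEt0v, hCdef]
        nlinarith [mul_le_mul_of_nonneg_left hLt0v hbE.le, mul_pos hhL hzpos,
          mul_pos hdE hzpos, mul_pos (mul_pos hc hδpos) hzpos, mul_pos hHpos hzpos]
      exact no_touch hder hD hEeq ht0pos (fun s a b => (hbefore s a b).1)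
    · -- L touches zero first
      have hLeq : Lε t0 = 0 := le_antisymm hcase hLt0
      have hLt0v : L t0 = -z := by
        have h' := hLeq
        simp only [hLεdef] at h'
        rw [hzdef]; linarith
      have hEt0v : -z ≤ E t0 := by
        have h' := hEt0
        simp only [hEεdef] at h'
        rw [hzdef]; linarith
      have hLδ : -δ < L t0 := by rw [hLt0v]; linarith
      have hhL : 0 < h (L t0) := hhpos _ hLδ
      have hhLH : h (L t0) ≤ H :=
        hHbd _ ⟨by rw [hLt0v]; linarith, by rw [hLt0v]; linarith⟩
      have hder : HasDerivAt Lε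
          ((h (L t0) * E t0 - dL * L t0 - c * (L t0)^2) + C * z) t0 := by
        rw [hLεdef]; exact (hL t0 ht0I.1).add hderexp
      have hD : 0 < (h (L t0) * E t0 - dL * L t0 - c * (L t0)^2) + C * z := by
        have h1 : 0 ≤ h (L t0) * (E t0 + z) := by nlinarith
        have h2 : -(H * z) ≤ h (L t0) * E t0 := by
          nlinarith [mul_nonneg (sub_nonneg.mpr hhLH) hzpos.le]
        have h4 : c * (L t0)^2 ≤ c * δ * z := by
          rw [hLt0v]
          nlinarith [mul_nonneg (mul_pos hc hzpos).le (sub_nonneg.mpr hzlt.le)]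
        have h5 : dL * L t0 = -(dL * z) := by rw [hLt0v]; ring
        have hCz : C * z = bE * z + H * z + c * δ * z + z := by rw [hCdef]; ring
        linarith [h2, h4, h5, hCz, mul_pos hdL hzpos, mul_pos hbE hzpos, hzpos]
      exact no_touch hder hD hLeq ht0pos (fun s a b => (hbefore s a b).2)
  -- Step 4: nonnegativity
  have hnonneg : ∀ t, 0 ≤ t → 0 ≤ E t ∧ 0 ≤ L t := by
    intro t ht
    have main : ∀ ε, 0 < ε → ε * Real.exp (C * t) < δ →
        0 < E t + ε * Real.exp (C * t) ∧ 0 < L t + ε * Real.exp (C * t) :=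
      fun ε h1 h2 => key t ht ε h1 h2 t ⟨ht, le_rfl⟩
    have hXpos : 0 < Real.exp (C * t) := Real.exp_pos _
    constructor
    · by_contra hneg
      push_neg at hneg
      set X := Real.exp (C * t) with hXdef
      set ε := min (δ / (2 * X)) (-(E t) / (2 * X)) with hεdef
      have hεpos : 0 < ε :=
        lt_min (by positivity) (div_pos (by linarith) (by positivity))
      have h1 : ε * X ≤ δ / 2 := by
        calc ε * X ≤ (δ / (2 * X)) * X :=
              mul_le_mul_of_nonneg_right (min_le_left _ _) hXpos.le
          _ = δ / 2 := by field_simp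
      have h2 : ε * X ≤ -(E t) / 2 := by
        calc ε * X ≤ (-(E t) / (2 * X)) * X :=
              mul_le_mul_of_nonneg_right (min_le_right _ _) hXpos.le
          _ = -(E t) / 2 := by field_simp
      have := (main ε hεpos (by linarith)).1
      linarith
    · by_contra hneg
      push_neg at hneg
      set X := Real.exp (C * t) with hXdef
      set ε := min (δ / (2 * X)) (-(L t) / (2 * X)) with hεdef
      have hεpos : 0 < ε :=
        lt_min (by positivity) (div_pos (by linarith) (by positivity))
      have h1 : ε * X ≤ δ / 2 := by
        calc ε * X ≤ (δ / (2 * X)) * X :=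
              mul_le_mul_of_nonneg_right (min_le_left _ _) hXpos.le
          _ = δ / 2 := by field_simp
      have h2 : ε * X ≤ -(L t) / 2 := by
        calc ε * X ≤ (-(L t) / (2 * X)) * X :=
              mul_le_mul_of_nonneg_right (min_le_right _ _) hXpos.le
          _ = -(L t) / 2 := by field_simp
      have := (main ε hεpos (by linarith)).2
      linarith
  -- Step 5: bound on the sum
  intro t ht
  refine ⟨(hnonneg t ht).1, (hnonneg t ht).2, ?_⟩
  set K := (bE + dE - dL)^2 / (4 * c * dE) with hKdef
  set M := max (E 0 + L 0) K with hMdef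
  set g := fun s => (E s + L s - M) * Real.exp (dE * s) with hgdef
  have hgd : ∀ s, 0 ≤ s → HasDerivAt g
      (((bE * L s - dE * E s - h (L s) * E s) + (h (L s) * E s - dL * L s - c * (L s)^2))
          * Real.exp (dE * s)
        + (E s + L s - M) * (dE * Real.exp (dE * s))) s := by
    intro s hs
    have h1 : HasDerivAt (fun u => E u + L u - M)
        ((bE * L s - dE * E s - h (L s) * E s) + (h (L s) * E s - dL * L s - c * (L s)^2)) s :=
      ((hE s hs).add (hL s hs)).sub_const M
    have ha : HasDerivAt (fun u : ℝ => dE * u) dE s := by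
      simpa using (hasDerivAt_id s).const_mul dE
    have h2 : HasDerivAt (fun u : ℝ => Real.exp (dE * u)) (dE * Real.exp (dE * s)) s := by
      have := ha.exp
      convert this using 1
      ring
    exact h1.mul h2
  have hKM : (bE + dE - dL)^2 / (4 * c) ≤ dE * M := by
    have h1 : dE * K = (bE + dE - dL)^2 / (4 * c) := by
      rw [hKdef]
      field_simp
    have h2 : K ≤ M := le_max_right _ _
    linarith [mul_le_mul_of_nonneg_left h2 hdE.le]
  have hdnp : ∀ x ∈ interior (Ici (0:ℝ)), deriv g x ≤ 0 := by
    rw [interior_Ici]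
    intro x hx
    rw [(hgd x (le_of_lt hx)).deriv]
    have hquad : (bE + dE - dL) * L x - c * (L x)^2 ≤ (bE + dE - dL)^2 / (4 * c) := by
      rw [le_div_iff₀ (by positivity)]
      nlinarith [sq_nonneg (bE + dE - dL - 2 * c * L x)]
    have hfac : ((bE * L x - dE * E x - h (L x) * E x)
        + (h (L x) * E x - dL * L x - c * (L x)^2)) + (E x + L x - M) * dE ≤ 0 := by
      nlinarith [hquad, hKM]
    have heq : ((bE * L x - dE * E x - h (L x) * E x)
          + (h (L x) * E x - dL * L x - c * (L x)^2)) * Real.exp (dE * x)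
        + (E x + L x - M) * (dE * Real.exp (dE * x))
        = (((bE * L x - dE * E x - h (L x) * E x)
          + (h (L x) * E x - dL * L x - c * (L x)^2)) + (E x + L x - M) * dE)
          * Real.exp (dE * x) := by ring
    rw [heq]
    exact mul_nonpos_of_nonpos_of_nonneg hfac (Real.exp_nonneg _)
  have hanti : AntitoneOn g (Ici 0) := by
    apply antitoneOn_of_deriv_nonpos (convex_Ici 0)
    · exact fun x hx => ((hgd x hx).continuousAt).continuousWithinAt
    · rw [interior_Ici]
      exact fun x hx => ((hgd x (le_of_lt hx)).differentiableAt).differentiableWithinAt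
    · exact hdnp
  have hg0 : g 0 ≤ 0 := by
    simp only [hgdef, mul_zero, Real.exp_zero, mul_one]
    have := le_max_left (E 0 + L 0) K
    simp only [← hMdef] at this
    linarith
  have hgt : g t ≤ g 0 := hanti self_mem_Ici ht ht
  have hle : g t ≤ 0 := le_trans hgt hg0
  by_contra hgt2
  push_neg at hgt2
  have hprod : 0 < (E t + L t - M) * Real.exp (dE * t) :=
    mul_pos (by linarith) (Real.exp_pos _)
  simp only [hgdef] at hle
  linarith
end

section
/- Define T(k) = (1/L̄)(2k + ((k + d_E)/b_E)(k + d_E - d_L)) and D(k) = (1/L̄)·((k + d_E)/(b_E d_E))·(k(b_E - d_L) - d_E d_L), and let k₊ = [d_E(b_E + 2d_E + d_L) + √(4 d_E³(b_E - d_E - d_L) + d_E²(b_E + 2d_E + d_L)²)]/(2(b_E - d_E - d_L)). Then for k > k₊ one has T(k) < D(k), and for 0 < k < k₊ one has T(k) > D(k). -/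
open Real

theorem stmt_7
    (bE dE dL Lbar : ℝ) (hbE : 0 < bE) (hdE : 0 < dE) (hdL : 0 < dL)
    (hLbar : 0 < Lbar) (hparams : dE + dL < bE)
    (T D : ℝ → ℝ)
    (hT : ∀ k, T k = (1 / Lbar) * (2 * k + (k + dE) / bE * (k + dE - dL)))
    (hD : ∀ k, D k = (1 / Lbar) * ((k + dE) / (bE * dE)) * (k * (bE - dL) - dE * dL))
    (kplus : ℝ)
    (hk : kplus = (dE * (bE + 2 * dE + dL) +
      Real.sqrt (4 * dE^3 * (bE - dE - dL) + dE^2 * (bE + 2 * dE + dL)^2)) /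
      (2 * (bE - dE - dL))) :
    (∀ k, kplus < k → T k < D k) ∧ (∀ k, 0 < k → k < kplus → D k < T k) := by
  set a : ℝ := bE - dE - dL with ha_def
  have ha : 0 < a := by simp only [ha_def]; linarith
  set B : ℝ := dE * (bE + 2 * dE + dL) with hB_def
  have hB : 0 < B := by positivity
  set s : ℝ := Real.sqrt (4 * dE^3 * (bE - dE - dL) + dE^2 * (bE + 2 * dE + dL)^2) with hs_def
  have hcube : 0 < dE^3 * a := mul_pos (pow_pos hdE 3) ha
  have hargnn : (0:ℝ) ≤ 4 * dE^3 * (bE - dE - dL) + dE^2 * (bE + 2 * dE + dL)^2 := by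
    have h2 : (0:ℝ) ≤ (dE * (bE + 2 * dE + dL))^2 := sq_nonneg _
    nlinarith [hcube]
  have hs2 : s^2 = 4 * dE^3 * a + B^2 := by
    rw [hs_def, Real.sq_sqrt hargnn]; ring
  have hsnn : 0 ≤ s := Real.sqrt_nonneg _
  have hsB : B < s := by nlinarith [hcube, hs2, hsnn, hB]
  have h2a : (0:ℝ) < 2 * a := by linarith
  have hkp : kplus * (2 * a) = B + s := by
    rw [hk]; field_simp
  have hkppos : 0 < kplus := by
    rw [hk]; exact div_pos (by linarith) h2a
  have hroot : a * kplus^2 - B * kplus - dE^3 = 0 := by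
    have h0 : (4*a) * (a * kplus^2 - B * kplus - dE^3) = 0 := by
      linear_combination (kplus * (2*a) - B + s) * hkp + hs2
    rcases mul_eq_zero.mp h0 with h | h
    · exact absurd h (by positivity)
    · exact h
  have hdiff : ∀ k, D k - T k = (a * k^2 - B * k - dE^3) / (Lbar * bE * dE) := by
    intro k
    rw [hT, hD]
    field_simp
    ring
  have hden : 0 < Lbar * bE * dE := by positivity
  have hid : ∀ k, a * k^2 - B * k - dE^3 = (k - kplus) * (a * (k + kplus) - B) := by
    intro k
    linear_combination hroot
  constructor
  · intro k hkk
    have hk0 : 0 < k := lt_trans hkppos hkk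
    have hfac : 0 < a * (k + kplus) - B := by
      nlinarith [mul_pos ha hk0, hkp, hsB]
    have hnum : 0 < a * k^2 - B * k - dE^3 := by
      rw [hid k]; exact mul_pos (by linarith) hfac
    have : 0 < D k - T k := by rw [hdiff k]; positivity
    linarith
  · intro k hk0 hkk
    have hfac : 0 < a * (k + kplus) - B := by
      nlinarith [mul_pos ha hk0, hkp, hsB]
    have hnum : a * k^2 - B * k - dE^3 < 0 := by
      rw [hid k]; exact mul_neg_of_neg_of_pos (by linarith) hfac
    have : D k - T k < 0 := by
      rw [hdiff k]; exact div_neg_of_neg_of_pos hnum hden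
    linarith
end

section
/- With k₊ = [d_E(b_E + 2d_E + d_L) + √(4d_E³(b_E - d_E - d_L) + d_E²(b_E + 2d_E + d_L)²)]/(2(b_E - d_E - d_L)), one has k₊ > d_E d_L/(b_E - d_L). -/
open Real

theorem stmt_9
    (bE dE dL : ℝ) (hbE : 0 < bE) (hdE : 0 < dE) (hdL : 0 < dL)
    (hparams : dE + dL < bE) :
    dE * dL / (bE - dL) <
      (dE * (bE + 2 * dE + dL) +
        Real.sqrt (4 * dE^3 * (bE - dE - dL) + dE^2 * (bE + 2 * dE + dL)^2)) /
        (2 * (bE - dE - dL)) := by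
  have hD : 0 < bE - dE - dL := by linarith
  have hbd : 0 < bE - dL := by linarith
  have h1 : dE * (bE + 2 * dE + dL) ≤
      Real.sqrt (4 * dE^3 * (bE - dE - dL) + dE^2 * (bE + 2 * dE + dL)^2) := by
    calc dE * (bE + 2 * dE + dL)
        = Real.sqrt ((dE * (bE + 2 * dE + dL))^2) := by
          rw [Real.sqrt_sq (by positivity)]
      _ ≤ _ := Real.sqrt_le_sqrt (by nlinarith [mul_pos (pow_pos hdE 3) hD])
  rw [div_lt_div_iff₀ hbd (by linarith)]
  nlinarith [h1, mul_pos hdE hdL, mul_pos hdE hD, mul_pos hdE hbd]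
end

section
/- If at a positive steady state (Ē, L̄) one has h'(L̄) ≤ 0 (h decreasing), then the Jacobian of the two-dimensional egg–larva system at (Ē, L̄) has negative trace and positive determinant, hence the steady state is locally linearly stable. -/
theorem stmt_12
    (bE dE dL c : ℝ) (hbE : 0 < bE) (hdE : 0 < dE) (hdL : 0 < dL) (hc : 0 < c)
    (h : ℝ → ℝ) (hC1 : ContDiff ℝ 1 h)
    (Ebar Lbar : ℝ) (hE : 0 < Ebar) (hL : 0 < Lbar)
    (hhL : 0 < h Lbar)
    (hss1 : Ebar * (dE + h Lbar) = bE * Lbar)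
    (hss2 : h Lbar * Ebar = dL * Lbar + c * Lbar^2)
    (hdec : deriv h Lbar ≤ 0)
    (A : Matrix (Fin 2) (Fin 2) ℝ)
    (hA : A = !![-dE - h Lbar, bE - deriv h Lbar * Ebar;
                 h Lbar, deriv h Lbar * Ebar - dL - 2 * c * Lbar]) :
    A.trace < 0 ∧ 0 < A.det := by
  subst hA
  constructor
  · simp [Matrix.trace_fin_two]
    nlinarith [mul_nonpos_of_nonpos_of_nonneg hdec hE.le]
  · rw [Matrix.det_fin_two]
    simp
    nlinarith [mul_nonpos_of_nonpos_of_nonneg hdec hE.le, mul_pos hdE hE,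
      mul_pos hc hL, mul_pos hhL hE, mul_pos (mul_pos hc hL) hdE, sq_nonneg Lbar,
      mul_pos hL hL]
end

section
/- For the Hill function h(L) = h_m + a L/(λ + L) (exponent p = 1) with h_m > d_E d_L/(b_E - d_L) and a, λ > 0, the steady-state equation c L + d_E b_E/(d_E + h(L)) = b_E - d_L has exactly one positive solution. -/
theorem stmt_15
    (bE dE dL c a lam hm : ℝ)
    (hbE : 0 < bE) (hdE : 0 < dE) (hdL : 0 < dL) (hc : 0 < c)
    (ha : 0 < a) (hlam : 0 < lam) (hhm : 0 < hm)
    (hbd : dL < bE) (hm0 : dE * dL / (bE - dL) < hm)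
    (h : ℝ → ℝ) (hdef : ∀ L, h L = hm + a * L / (lam + L)) :
    ∃! L : ℝ, 0 < L ∧ c * L + dE * bE / (dE + h L) = bE - dL := by
  have hbd' : 0 < bE - dL := by linarith
  set A : ℝ := c * (dE + hm + a) with hA
  set B : ℝ := (bE - dL) * (dE + hm + a) - c * lam * (dE + hm) - dE * bE with hB
  set C : ℝ := lam * (hm * (bE - dL) - dE * dL) with hC
  have hApos : 0 < A := by positivity
  have hCpos : 0 < C := by
    have h1 : dE * dL < hm * (bE - dL) := by
      rw [div_lt_iff₀ hbd'] at hm0; linarith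
    have h2 : 0 < hm * (bE - dL) - dE * dL := by linarith
    positivity
  have key : ∀ L : ℝ, 0 < L →
      ((c * L + dE * bE / (dE + h L) = bE - dL) ↔ (-A * L^2 + B * L + C = 0)) := by
    intro L hL
    have hls : (0:ℝ) < lam + L := by linarith
    have hls' : lam + L ≠ 0 := ne_of_gt hls
    have hD : 0 < dE + h L := by rw [hdef]; positivity
    have hD' : dE + h L ≠ 0 := ne_of_gt hD
    rw [hdef] at hD' ⊢
    rw [hA, hB, hC]
    constructor
    · intro H
      field_simp at H
      linear_combination -H
    · intro H
      field_simp
      linear_combination -H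
  obtain ⟨s, hs0, hs2⟩ : ∃ s : ℝ, 0 ≤ s ∧ s^2 = B^2 + 4*A*C :=
    ⟨Real.sqrt (B^2 + 4*A*C), Real.sqrt_nonneg _, Real.sq_sqrt (by positivity)⟩
  have hsB : B < s := by nlinarith
  have hsB' : -B < s := by nlinarith
  have hA' : A ≠ 0 := ne_of_gt hApos
  set L0 : ℝ := (B + s) / (2*A) with hL0
  have hL0pos : 0 < L0 := div_pos (by linarith) (by linarith)
  have hQ0 : -A * L0^2 + B * L0 + C = 0 := by
    have keyq : (4*A) * (-A * L0^2 + B * L0 + C) = B^2 - s^2 + 4*A*C := by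
      rw [hL0]; field_simp; ring
    have h4 : (4*A) ≠ 0 := by positivity
    have hz : (4*A) * (-A * L0^2 + B * L0 + C) = 0 := by rw [keyq]; linarith [hs2]
    exact (mul_eq_zero.mp hz).resolve_left h4
  refine ⟨L0, ⟨hL0pos, (key L0 hL0pos).mpr hQ0⟩, ?_⟩
  rintro x ⟨hx, hxe⟩
  rw [key x hx] at hxe
  have hfac : (x - L0) * (A * (x + L0) - B) = 0 := by linear_combination hQ0 - hxe
  have hpos : A * (x + L0) - B ≠ 0 := by
    have hAL0 : A * L0 = (B + s)/2 := by rw [hL0]; field_simp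
    have h2 : 0 < A * (x + L0) - B := by nlinarith
    exact ne_of_gt h2
  rcases mul_eq_zero.mp hfac with h1 | h2
  · linarith [sub_eq_zero.mp h1]
  · exact absurd h2 hpos
end

section
/- Let x > 0 be a critical point of φ(u) = η u²/h(ηu) for η > 0, h C¹ and positive. Then with x = ηu, φ'(u) = 0 if and only if 2 h(x) = x h'(x). For the Hill function h(x) = h_m + a x^p/((αL̄)^p + x^p) with p > 2 and h_m/a < (p-2)²/(8p), the equation 2h(x) = x h'(x) has exactly two positive solutions, given by x^p = (αL̄)^p · [(p-2)a - 4h_m ± √(a²(p-2)² - 8 a p h_m)]/(4(h_m + a)). -/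
open Real

theorem stmt_19
    (η a hm α Lbar p : ℝ)
    (hη : 0 < η) (ha : 0 < a) (hhm : 0 < hm) (hα : 0 < α) (hLbar : 0 < Lbar)
    (hp : 2 < p) (hratio : hm / a < (p - 2)^2 / (8 * p)) :
    -- (a) critical point characterization, for a general C¹ positive h
    (∀ h : ℝ → ℝ, ContDiff ℝ 1 h → (∀ x, 0 < h x) →
      ∀ u : ℝ, 0 < u →
        (deriv (fun v => η * v^2 / h (η * v)) u = 0 ↔
          2 * h (η * u) = (η * u) * deriv h (η * u))) ∧
    -- (b) exactly two positive solutions for the Hill function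
    (∀ h : ℝ → ℝ,
      (∀ x, h x = hm + a * x ^ p / ((α * Lbar) ^ p + x ^ p)) →
      ∃ x₁ x₂ : ℝ, 0 < x₁ ∧ 0 < x₂ ∧ x₁ ≠ x₂ ∧
        x₁ ^ p = (α * Lbar) ^ p *
          ((p - 2) * a - 4 * hm - Real.sqrt (a^2 * (p - 2)^2 - 8 * a * p * hm)) /
          (4 * (hm + a)) ∧
        x₂ ^ p = (α * Lbar) ^ p *
          ((p - 2) * a - 4 * hm + Real.sqrt (a^2 * (p - 2)^2 - 8 * a * p * hm)) /
          (4 * (hm + a)) ∧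
        ∀ x : ℝ, 0 < x →
          (2 * h x = x * deriv h x ↔ (x = x₁ ∨ x = x₂))) := by
  constructor
  · -- part (a)
    intro h hC1 hpos u hu
    have hdh : DifferentiableAt ℝ h (η * u) :=
      (hC1.differentiable one_ne_zero).differentiableAt
    have h1 : HasDerivAt (fun v : ℝ => η * v) η u := by
      simpa using (hasDerivAt_id u).const_mul η
    have hinner : HasDerivAt (fun v => h (η * v)) (deriv h (η * u) * η) u :=
      hdh.hasDerivAt.comp u h1
    have hnum : HasDerivAt (fun v : ℝ => η * v ^ 2) (η * (2 * u)) u := by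
      simpa using (hasDerivAt_pow 2 u).const_mul η
    have hden_ne : h (η * u) ≠ 0 := (hpos _).ne'
    have hd : HasDerivAt (fun v => η * v ^ 2 / h (η * v))
        ((η * (2 * u) * h (η * u) - η * u ^ 2 * (deriv h (η * u) * η)) / (h (η * u)) ^ 2) u :=
      hnum.div hinner hden_ne
    rw [hd.deriv, div_eq_zero_iff]
    have hηu : (0:ℝ) < η * u := mul_pos hη hu
    constructor
    · rintro (h0 | h0)
      · have h2 : η * u * (2 * h (η * u) - (η * u) * deriv h (η * u)) = 0 := by
          linear_combination h0
        rcases mul_eq_zero.mp h2 with h3 | h3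
        · exact absurd h3 hηu.ne'
        · linarith
      · exact absurd h0 (pow_ne_zero 2 hden_ne)
    · intro h0
      left
      linear_combination (η * u) * h0
  · -- part (b)
    intro h hh
    set c : ℝ := (α * Lbar) ^ p with hc_def
    have hc : 0 < c := rpow_pos_of_pos (by positivity) p
    set sD : ℝ := Real.sqrt (a ^ 2 * (p - 2) ^ 2 - 8 * a * p * hm) with hsD_def
    have hD : 0 < a ^ 2 * (p - 2) ^ 2 - 8 * a * p * hm := by
      have h1 := (div_lt_div_iff₀ ha (by positivity : (0:ℝ) < 8 * p)).mp hratio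
      nlinarith
    have hsD2 : sD ^ 2 = a ^ 2 * (p - 2) ^ 2 - 8 * a * p * hm := sq_sqrt hD.le
    have hsD_pos : 0 < sD := Real.sqrt_pos.mpr hD
    have hNpos : 0 < (p - 2) * a - 4 * hm := by
      have h1 := (div_lt_div_iff₀ ha (by positivity : (0:ℝ) < 8 * p)).mp hratio
      nlinarith
    have hsD_lt : sD < (p - 2) * a - 4 * hm := by
      rw [hsD_def, Real.sqrt_lt' hNpos]
      nlinarith
    set y₁ : ℝ := c * ((p - 2) * a - 4 * hm - sD) / (4 * (hm + a)) with hy₁_def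
    set y₂ : ℝ := c * ((p - 2) * a - 4 * hm + sD) / (4 * (hm + a)) with hy₂_def
    have hha : 0 < hm + a := by linarith
    have hy₁ : 0 < y₁ := by
      apply div_pos (mul_pos hc (by linarith)) (by linarith)
    have hy₂ : 0 < y₂ := by
      apply div_pos (mul_pos hc (by linarith)) (by linarith)
    have hy₁₂ : y₁ ≠ y₂ := by
      have : y₂ - y₁ = c * (2 * sD) / (4 * (hm + a)) := by
        rw [hy₁_def, hy₂_def]; ring
      intro hcon
      have h2 : c * (2 * sD) / (4 * (hm + a)) > 0 := by positivity
      rw [← this] at h2; rw [hcon] at h2; simp at h2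
    refine ⟨y₁ ^ p⁻¹, y₂ ^ p⁻¹, rpow_pos_of_pos hy₁ _, rpow_pos_of_pos hy₂ _, ?_, ?_, ?_, ?_⟩
    · intro hcon
      apply hy₁₂
      calc y₁ = (y₁ ^ p⁻¹) ^ p := (Real.rpow_inv_rpow hy₁.le (by positivity)).symm
        _ = (y₂ ^ p⁻¹) ^ p := by rw [hcon]
        _ = y₂ := Real.rpow_inv_rpow hy₂.le (by positivity)
    · rw [Real.rpow_inv_rpow hy₁.le (by positivity)]
    · rw [Real.rpow_inv_rpow hy₂.le (by positivity)]
    · intro x hx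
      -- derivative of h at x
      have hfun : h = fun x => hm + a * x ^ p / (c + x ^ p) := funext hh
      have hxp : 0 < x ^ p := rpow_pos_of_pos hx p
      have hs : 0 < c + x ^ p := by linarith
      have hpow : HasDerivAt (fun x : ℝ => x ^ p) (p * x ^ (p - 1)) x :=
        Real.hasDerivAt_rpow_const (Or.inl hx.ne')
      have hdh : HasDerivAt h
          ((a * (p * x ^ (p - 1)) * (c + x ^ p) - a * x ^ p * (p * x ^ (p - 1))) / (c + x ^ p) ^ 2)
          x := by
        rw [hfun]
        exact (HasDerivAt.div (hpow.const_mul a) (hpow.const_add c) hs.ne').const_add hm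
      have hxp1 : x ^ (p - 1) * x = x ^ p := by
        rw [← Real.rpow_add_one hx.ne' (p - 1)]
        norm_num
      -- the clean form of x * h'(x)
      have hderiv_val : x * deriv h x = a * p * c * x ^ p / (c + x ^ p) ^ 2 := by
        rw [hdh.deriv, ← hxp1]
        field_simp
        ring
      -- 2 h x and the equation
      have hhx : h x = hm + a * x ^ p / (c + x ^ p) := hh x
      have key : (2 * h x = x * deriv h x) ↔
          2 * (hm + a) * (x ^ p) ^ 2 + c * ((2 - p) * a + 4 * hm) * x ^ p + 2 * hm * c ^ 2 = 0 := by
        rw [hderiv_val, hhx]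
        constructor
        · intro H
          field_simp at H
          have H2 : (c + x ^ p) *
              (2 * (hm + a) * (x ^ p) ^ 2 + c * ((2 - p) * a + 4 * hm) * x ^ p + 2 * hm * c ^ 2)
              = 0 := by linear_combination (c + x ^ p) * H
          exact (mul_eq_zero.mp H2).resolve_left hs.ne'
        · intro H
          field_simp
          linear_combination H
      have hp0 : p ≠ 0 := by positivity
      have hx1p : (y₁ ^ p⁻¹) ^ p = y₁ := Real.rpow_inv_rpow hy₁.le hp0
      have hx2p : (y₂ ^ p⁻¹) ^ p = y₂ := Real.rpow_inv_rpow hy₂.le hp0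
      have hinj : ∀ u v : ℝ, 0 < u → 0 < v → u ^ p = v ^ p → u = v := by
        intro u v hu hv huv
        rcases lt_trichotomy u v with hlt | heq | hgt
        · exact absurd huv (ne_of_lt (Real.rpow_lt_rpow hu.le hlt (by linarith)))
        · exact heq
        · exact absurd huv.symm (ne_of_lt (Real.rpow_lt_rpow hv.le hgt (by linarith)))
      have hfac : 2 * (hm + a) * (x ^ p) ^ 2 + c * ((2 - p) * a + 4 * hm) * x ^ p + 2 * hm * c ^ 2
          = 2 * (hm + a) * (x ^ p - y₁) * (x ^ p - y₂) := by
        rw [hy₁_def, hy₂_def]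
        field_simp
        linear_combination (2 * c ^ 2) * hsD2
      rw [key, hfac]
      constructor
      · intro H
        rcases mul_eq_zero.mp H with H1 | H2
        · rcases mul_eq_zero.mp H1 with H0 | H1
          · exact absurd H0 (by positivity)
          · left
            exact hinj x _ hx (rpow_pos_of_pos hy₁ _) (by rw [hx1p]; linarith [sub_eq_zero.mp H1])
        · right
          exact hinj x _ hx (rpow_pos_of_pos hy₂ _) (by rw [hx2p]; linarith [sub_eq_zero.mp H2])
      · rintro (rfl | rfl)
        · rw [hx1p]
          ring
        · rw [hx2p]
          ring
end
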